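/- arXiv:2509.09300 — 2 statements merged into one kernel-verified Lean document; each statement's English description precedes it below -/
import Mathlib

section
/- Differential property of the 2D OLCT: let f ∈ L¹(ℝ²) be infinitely differentiable with all relevant derivatives integrable, and define the first-order operators Δ₁ g = −(∂g/∂t₁ + (i/b₁)(a₁ t₁ + τ₁) g) and Δ₂ g = −(∂g/∂t₂ + (i/b₂)(a₂ t₂ + τ₂) g). Then for all m, n ∈ ℕ, O_{M₁M₂}[Δ₁^m Δ₂^n f](u₁, u₂) = (−i u₁/b₁)^m (−i u₂/b₂)^n O_{M₁M₂}[f](u₁, u₂). -/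
open MeasureTheory Real

noncomputable section

/-- Parameters M = (a, b, c, d, τ, η) of an offset linear canonical transform. -/
structure OLCTParams where
  a : ℝ
  b : ℝ
  c : ℝ
  d : ℝ
  τ : ℝ
  η : ℝ

/-- The OLCT kernel K_M(u, t) = (1/√(2π i b)) exp((i/(2b))(a t² + 2t(τ−u) − 2u(dτ−bη) + d u² + d τ²)). -/
def olctKernel (M : OLCTParams) (u t : ℝ) : ℂ :=
  (((2 * Real.pi : ℝ) : ℂ) * Complex.I * (M.b : ℂ)) ^ (-(1 / 2 : ℂ)) *
    Complex.exp ((Complex.I / ((2 * M.b : ℝ) : ℂ)) *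
      ((M.a * t ^ 2 + 2 * t * (M.τ - u) - 2 * u * (M.d * M.τ - M.b * M.η)
          + M.d * u ^ 2 + M.d * M.τ ^ 2 : ℝ) : ℂ))

/-- The 2D OLCT: O_{M₁M₂} f (u) = ∫_{ℝ²} K_{M₁}(u₁,t₁) K_{M₂}(u₂,t₂) f(t) dt. -/
def olct (M₁ M₂ : OLCTParams) (f : ℝ × ℝ → ℂ) (u : ℝ × ℝ) : ℂ :=
  ∫ t : ℝ × ℝ, olctKernel M₁ u.1 t.1 * olctKernel M₂ u.2 t.2 * f t

/-- The modified first-coordinate derivative operator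
Δ₁ g = −(∂g/∂t₁ + (i/b₁)(a₁ t₁ + τ₁) g). -/
def olctD₁ (M : OLCTParams) (g : ℝ × ℝ → ℂ) : ℝ × ℝ → ℂ :=
  fun t => -(fderiv ℝ g t (1, 0) + (Complex.I / (M.b : ℂ)) * ((M.a * t.1 + M.τ : ℝ) : ℂ) * g t)

/-- The modified second-coordinate derivative operator
Δ₂ g = −(∂g/∂t₂ + (i/b₂)(a₂ t₂ + τ₂) g). -/
def olctD₂ (M : OLCTParams) (g : ℝ × ℝ → ℂ) : ℝ × ℝ → ℂ :=
  fun t => -(fderiv ℝ g t (0, 1) + (Complex.I / (M.b : ℂ)) * ((M.a * t.2 + M.τ : ℝ) : ℂ) * g t)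

lemma kernel_hasDerivAt (M : OLCTParams) (hb : M.b ≠ 0) (u x : ℝ) :
    HasDerivAt (olctKernel M u)
      ((Complex.I / (M.b : ℂ)) * ((M.a * x + M.τ - u : ℝ) : ℂ) * olctKernel M u x) x := by
  have h1 : HasDerivAt (fun t : ℝ => M.a * t ^ 2 + 2 * t * (M.τ - u)
      - 2 * u * (M.d * M.τ - M.b * M.η) + M.d * u ^ 2 + M.d * M.τ ^ 2)
      (M.a * (2 * x) + 2 * (M.τ - u)) x := by
    have hp : HasDerivAt (fun t : ℝ => t ^ 2) (2 * x) x := by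
      simpa using hasDerivAt_pow 2 x
    have := (((hp.const_mul M.a).add (((hasDerivAt_id x).const_mul 2).mul_const
      (M.τ - u))).sub_const (2 * u * (M.d * M.τ - M.b * M.η))).add_const (M.d * u ^ 2)
    have := this.add_const (M.d * M.τ ^ 2)
    exact this.congr_deriv (by ring)
  have h2 := ((h1.ofReal_comp.const_mul
    (Complex.I / ((2 * M.b : ℝ) : ℂ))).cexp).const_mul
    ((((2 * Real.pi : ℝ) : ℂ) * Complex.I * (M.b : ℂ)) ^ (-(1 / 2 : ℂ)))
  refine h2.congr_deriv ?_
  unfold olctKernel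
  have hb' : (M.b : ℂ) ≠ 0 := Complex.ofReal_ne_zero.mpr hb
  push_cast
  field_simp
  ring

lemma norm_olctKernel (M : OLCTParams) (u t : ℝ) :
    ‖olctKernel M u t‖ = ‖(((2 * Real.pi : ℝ) : ℂ) * Complex.I * (M.b : ℂ)) ^ (-(1 / 2 : ℂ))‖ := by
  unfold olctKernel
  rw [norm_mul]
  have : (Complex.I / ((2 * M.b : ℝ) : ℂ)) *
      ((M.a * t ^ 2 + 2 * t * (M.τ - u) - 2 * u * (M.d * M.τ - M.b * M.η)
          + M.d * u ^ 2 + M.d * M.τ ^ 2 : ℝ) : ℂ)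
      = (((M.a * t ^ 2 + 2 * t * (M.τ - u) - 2 * u * (M.d * M.τ - M.b * M.η)
          + M.d * u ^ 2 + M.d * M.τ ^ 2) / (2 * M.b) : ℝ) : ℂ) * Complex.I := by
    push_cast
    ring
  rw [this, Complex.norm_exp_ofReal_mul_I, mul_one]

lemma continuous_olctKernel (M : OLCTParams) (u : ℝ) : Continuous (olctKernel M u) := by
  unfold olctKernel
  fun_prop

lemma integral_fderiv_fst_eq_zero (H : ℝ × ℝ → ℂ) (hd : Differentiable ℝ H)
    (hH : Integrable H) (hH' : Integrable (fun t => fderiv ℝ H t (1, 0))) :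
    ∫ t : ℝ × ℝ, fderiv ℝ H t (1, 0) = 0 := by
  have key : ∀ x y : ℝ, HasDerivAt (fun x' => H (x', y)) (fderiv ℝ H (x, y) (1, 0)) x := by
    intro x y
    have h1 : HasDerivAt (fun x' : ℝ => (x', y)) ((1 : ℝ), (0 : ℝ)) x :=
      (hasDerivAt_id x).prodMk (hasDerivAt_const x y)
    exact (hd (x, y)).hasFDerivAt.comp_hasDerivAt x h1
  have hH2 : Integrable H ((volume : Measure ℝ).prod volume) := by
    rwa [← Measure.volume_eq_prod ℝ ℝ]
  have hH'2 : Integrable (fun t : ℝ × ℝ => fderiv ℝ H t (1, 0))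
      ((volume : Measure ℝ).prod volume) := by rwa [← Measure.volume_eq_prod ℝ ℝ]
  rw [Measure.volume_eq_prod ℝ ℝ, integral_prod_symm _ hH'2]
  have h0 : ∀ᵐ y : ℝ, (∫ x : ℝ, fderiv ℝ H (x, y) (1, 0)) = 0 := by
    filter_upwards [hH2.prod_left_ae, hH'2.prod_left_ae] with y h1 h2
    exact integral_eq_zero_of_hasDerivAt_of_integrable (fun x => key x y) h2 h1
  rw [integral_congr_ae h0, integral_zero]

lemma integral_fderiv_snd_eq_zero (H : ℝ × ℝ → ℂ) (hd : Differentiable ℝ H)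
    (hH : Integrable H) (hH' : Integrable (fun t => fderiv ℝ H t (0, 1))) :
    ∫ t : ℝ × ℝ, fderiv ℝ H t (0, 1) = 0 := by
  have key : ∀ x y : ℝ, HasDerivAt (fun y' => H (x, y')) (fderiv ℝ H (x, y) (0, 1)) y := by
    intro x y
    have h1 : HasDerivAt (fun y' : ℝ => (x, y')) ((0 : ℝ), (1 : ℝ)) y :=
      (hasDerivAt_const y x).prodMk (hasDerivAt_id y)
    exact (hd (x, y)).hasFDerivAt.comp_hasDerivAt y h1
  have hH2 : Integrable H ((volume : Measure ℝ).prod volume) := by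
    rwa [← Measure.volume_eq_prod ℝ ℝ]
  have hH'2 : Integrable (fun t : ℝ × ℝ => fderiv ℝ H t (0, 1))
      ((volume : Measure ℝ).prod volume) := by rwa [← Measure.volume_eq_prod ℝ ℝ]
  rw [Measure.volume_eq_prod ℝ ℝ, integral_prod _ hH'2]
  have h0 : ∀ᵐ x : ℝ, (∫ y : ℝ, fderiv ℝ H (x, y) (0, 1)) = 0 := by
    filter_upwards [hH2.prod_right_ae, hH'2.prod_right_ae] with x h1 h2
    exact integral_eq_zero_of_hasDerivAt_of_integrable (fun y => key x y) h2 h1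
  rw [integral_congr_ae h0, integral_zero]

lemma integrable_kernel_mul (M₁ M₂ : OLCTParams) (u : ℝ × ℝ) (g : ℝ × ℝ → ℂ)
    (hg : Integrable g) :
    Integrable (fun t : ℝ × ℝ => olctKernel M₁ u.1 t.1 * olctKernel M₂ u.2 t.2 * g t) := by
  apply hg.bdd_mul
  · exact (((continuous_olctKernel M₁ u.1).comp continuous_fst).mul
      ((continuous_olctKernel M₂ u.2).comp continuous_snd)).aestronglyMeasurable
  · refine Filter.Eventually.of_forall (fun t => le_of_eq (?_ : _ = ‖(((2 * Real.pi : ℝ) : ℂ) * Complex.I * (M₁.b : ℂ)) ^ (-(1 / 2 : ℂ))‖ *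
      ‖(((2 * Real.pi : ℝ) : ℂ) * Complex.I * (M₂.b : ℂ)) ^ (-(1 / 2 : ℂ))‖))
    rw [norm_mul, norm_olctKernel, norm_olctKernel]

lemma olct_step1 (M₁ M₂ : OLCTParams) (hb₁ : M₁.b ≠ 0) (hb₂ : M₂.b ≠ 0) (g : ℝ × ℝ → ℂ)
    (hg : Integrable g) (hgs : ContDiff ℝ (⊤ : ℕ∞) g) (hD : Integrable (olctD₁ M₁ g)) (u : ℝ × ℝ) :
    olct M₁ M₂ (olctD₁ M₁ g) u = (-(Complex.I * (u.1 : ℂ)) / (M₁.b : ℂ)) * olct M₁ M₂ g u := by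
  set K : ℝ × ℝ → ℂ := fun t => olctKernel M₁ u.1 t.1 * olctKernel M₂ u.2 t.2 with hK
  set H : ℝ × ℝ → ℂ := fun t => K t * g t with hHdef
  have hgd : Differentiable ℝ g := hgs.differentiable (by simp)
  have hK1 : ∀ t : ℝ × ℝ, DifferentiableAt ℝ (fun s : ℝ × ℝ => olctKernel M₁ u.1 s.1) t :=
    fun t => (kernel_hasDerivAt M₁ hb₁ u.1 t.1).differentiableAt.comp t
      differentiable_fst.differentiableAt
  have hK2 : ∀ t : ℝ × ℝ, DifferentiableAt ℝ (fun s : ℝ × ℝ => olctKernel M₂ u.2 s.2) t :=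
    fun t => (kernel_hasDerivAt M₂ hb₂ u.2 t.2).differentiableAt.comp t
      differentiable_snd.differentiableAt
  have hKdiff : Differentiable ℝ K := fun t => ((hK1 t).mul (hK2 t))
  have hHdiff : Differentiable ℝ H := fun t => (hKdiff t).mul (hgd t)
  -- compute the partial derivative of H in the first direction
  have hDH : ∀ t : ℝ × ℝ, fderiv ℝ H t (1, 0) =
      (Complex.I / (M₁.b : ℂ)) * ((M₁.a * t.1 + M₁.τ - u.1 : ℝ) : ℂ) * H t
        + K t * fderiv ℝ g t (1, 0) := by
    intro t
    have hline : HasDerivAt (fun x : ℝ => (x, t.2)) ((1 : ℝ), (0 : ℝ)) t.1 :=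
      (hasDerivAt_id t.1).prodMk (hasDerivAt_const t.1 t.2)
    have h1 : HasDerivAt (fun x => H (x, t.2)) (fderiv ℝ H t (1, 0)) t.1 := by
      have := (hHdiff t).hasFDerivAt.comp_hasDerivAt t.1 hline
      exact this
    have hg1 : HasDerivAt (fun x => g (x, t.2)) (fderiv ℝ g t (1, 0)) t.1 := by
      have := (hgd t).hasFDerivAt.comp_hasDerivAt t.1 hline
      exact this
    have h2 : HasDerivAt (fun x => H (x, t.2))
        ((Complex.I / (M₁.b : ℂ)) * ((M₁.a * t.1 + M₁.τ - u.1 : ℝ) : ℂ) * olctKernel M₁ u.1 t.1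
            * olctKernel M₂ u.2 t.2 * g t
          + olctKernel M₁ u.1 t.1 * olctKernel M₂ u.2 t.2 * fderiv ℝ g t (1, 0)) t.1 := by
      have := (((kernel_hasDerivAt M₁ hb₁ u.1 t.1).mul_const
        (olctKernel M₂ u.2 t.2)).mul hg1)
      exact this
    have := h1.unique h2
    rw [this, hHdef, hK]
    ring
  -- the pointwise integrand identity
  have hptwise : ∀ t : ℝ × ℝ, K t * olctD₁ M₁ g t =
      -(fderiv ℝ H t (1, 0)) + (-(Complex.I * (u.1 : ℂ)) / (M₁.b : ℂ)) * H t := by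
    intro t
    rw [hDH t, olctD₁]
    simp only [hHdef, hK]
    push_cast
    ring
  -- integrability facts
  have hHint : Integrable H := integrable_kernel_mul M₁ M₂ u g hg
  have hKD : Integrable (fun t => K t * olctD₁ M₁ g t) :=
    integrable_kernel_mul M₁ M₂ u (olctD₁ M₁ g) hD
  have hDHint : Integrable (fun t => fderiv ℝ H t (1, 0)) := by
    have heq : (fun t => fderiv ℝ H t (1, 0)) =
        fun t => -(K t * olctD₁ M₁ g t) + (-(Complex.I * (u.1 : ℂ)) / (M₁.b : ℂ)) * H t := by
      funext t
      linear_combination hptwise t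
    rw [heq]
    exact hKD.neg.add (hHint.const_mul _)
  have hzero : ∫ t : ℝ × ℝ, fderiv ℝ H t (1, 0) = 0 :=
    integral_fderiv_fst_eq_zero H hHdiff hHint hDHint
  calc olct M₁ M₂ (olctD₁ M₁ g) u
      = ∫ t : ℝ × ℝ, (-(fderiv ℝ H t (1, 0))
          + (-(Complex.I * (u.1 : ℂ)) / (M₁.b : ℂ)) * H t) := by
        rw [olct]
        exact integral_congr_ae (Filter.Eventually.of_forall fun t => hptwise t)
    _ = (∫ t : ℝ × ℝ, -(fderiv ℝ H t (1, 0)))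
          + ∫ t : ℝ × ℝ, (-(Complex.I * (u.1 : ℂ)) / (M₁.b : ℂ)) * H t :=
        integral_add hDHint.neg (hHint.const_mul _)
    _ = (-(Complex.I * (u.1 : ℂ)) / (M₁.b : ℂ)) * olct M₁ M₂ g u := by
        rw [integral_neg, hzero, neg_zero, zero_add, integral_const_mul, olct]

lemma olct_step2 (M₁ M₂ : OLCTParams) (hb₁ : M₁.b ≠ 0) (hb₂ : M₂.b ≠ 0) (g : ℝ × ℝ → ℂ)
    (hg : Integrable g) (hgs : ContDiff ℝ (⊤ : ℕ∞) g) (hD : Integrable (olctD₂ M₂ g)) (u : ℝ × ℝ) :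
    olct M₁ M₂ (olctD₂ M₂ g) u = (-(Complex.I * (u.2 : ℂ)) / (M₂.b : ℂ)) * olct M₁ M₂ g u := by
  set K : ℝ × ℝ → ℂ := fun t => olctKernel M₁ u.1 t.1 * olctKernel M₂ u.2 t.2 with hK
  set H : ℝ × ℝ → ℂ := fun t => K t * g t with hHdef
  have hgd : Differentiable ℝ g := hgs.differentiable (by simp)
  have hK1 : ∀ t : ℝ × ℝ, DifferentiableAt ℝ (fun s : ℝ × ℝ => olctKernel M₁ u.1 s.1) t :=
    fun t => (kernel_hasDerivAt M₁ hb₁ u.1 t.1).differentiableAt.comp t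
      differentiable_fst.differentiableAt
  have hK2 : ∀ t : ℝ × ℝ, DifferentiableAt ℝ (fun s : ℝ × ℝ => olctKernel M₂ u.2 s.2) t :=
    fun t => (kernel_hasDerivAt M₂ hb₂ u.2 t.2).differentiableAt.comp t
      differentiable_snd.differentiableAt
  have hKdiff : Differentiable ℝ K := fun t => ((hK1 t).mul (hK2 t))
  have hHdiff : Differentiable ℝ H := fun t => (hKdiff t).mul (hgd t)
  have hDH : ∀ t : ℝ × ℝ, fderiv ℝ H t (0, 1) =
      (Complex.I / (M₂.b : ℂ)) * ((M₂.a * t.2 + M₂.τ - u.2 : ℝ) : ℂ) * H t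
        + K t * fderiv ℝ g t (0, 1) := by
    intro t
    have hline : HasDerivAt (fun y : ℝ => (t.1, y)) ((0 : ℝ), (1 : ℝ)) t.2 :=
      (hasDerivAt_const t.2 t.1).prodMk (hasDerivAt_id t.2)
    have h1 : HasDerivAt (fun y => H (t.1, y)) (fderiv ℝ H t (0, 1)) t.2 := by
      have := (hHdiff t).hasFDerivAt.comp_hasDerivAt t.2 hline
      exact this
    have hg1 : HasDerivAt (fun y => g (t.1, y)) (fderiv ℝ g t (0, 1)) t.2 := by
      have := (hgd t).hasFDerivAt.comp_hasDerivAt t.2 hline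
      exact this
    have h2 : HasDerivAt (fun y => H (t.1, y))
        (olctKernel M₁ u.1 t.1 * (Complex.I / (M₂.b : ℂ)) * ((M₂.a * t.2 + M₂.τ - u.2 : ℝ) : ℂ)
            * olctKernel M₂ u.2 t.2 * g t
          + olctKernel M₁ u.1 t.1 * olctKernel M₂ u.2 t.2 * fderiv ℝ g t (0, 1)) t.2 := by
      have := (((kernel_hasDerivAt M₂ hb₂ u.2 t.2).const_mul
        (olctKernel M₁ u.1 t.1)).mul hg1)
      exact this.congr_deriv (by ring)
    have := h1.unique h2
    rw [this, hHdef, hK]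
    ring
  have hptwise : ∀ t : ℝ × ℝ, K t * olctD₂ M₂ g t =
      -(fderiv ℝ H t (0, 1)) + (-(Complex.I * (u.2 : ℂ)) / (M₂.b : ℂ)) * H t := by
    intro t
    rw [hDH t, olctD₂]
    simp only [hHdef, hK]
    push_cast
    ring
  have hHint : Integrable H := integrable_kernel_mul M₁ M₂ u g hg
  have hKD : Integrable (fun t => K t * olctD₂ M₂ g t) :=
    integrable_kernel_mul M₁ M₂ u (olctD₂ M₂ g) hD
  have hDHint : Integrable (fun t => fderiv ℝ H t (0, 1)) := by
    have heq : (fun t => fderiv ℝ H t (0, 1)) =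
        fun t => -(K t * olctD₂ M₂ g t) + (-(Complex.I * (u.2 : ℂ)) / (M₂.b : ℂ)) * H t := by
      funext t
      linear_combination hptwise t
    rw [heq]
    exact hKD.neg.add (hHint.const_mul _)
  have hzero : ∫ t : ℝ × ℝ, fderiv ℝ H t (0, 1) = 0 :=
    integral_fderiv_snd_eq_zero H hHdiff hHint hDHint
  calc olct M₁ M₂ (olctD₂ M₂ g) u
      = ∫ t : ℝ × ℝ, (-(fderiv ℝ H t (0, 1))
          + (-(Complex.I * (u.2 : ℂ)) / (M₂.b : ℂ)) * H t) := by
        rw [olct]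
        exact integral_congr_ae (Filter.Eventually.of_forall fun t => hptwise t)
    _ = (∫ t : ℝ × ℝ, -(fderiv ℝ H t (0, 1)))
          + ∫ t : ℝ × ℝ, (-(Complex.I * (u.2 : ℂ)) / (M₂.b : ℂ)) * H t :=
        integral_add hDHint.neg (hHint.const_mul _)
    _ = (-(Complex.I * (u.2 : ℂ)) / (M₂.b : ℂ)) * olct M₁ M₂ g u := by
        rw [integral_neg, hzero, neg_zero, zero_add, integral_const_mul, olct]

lemma contDiff_olctD₁ (M : OLCTParams) (g : ℝ × ℝ → ℂ) (hg : ContDiff ℝ (⊤ : ℕ∞) g) :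
    ContDiff ℝ (⊤ : ℕ∞) (olctD₁ M g) := by
  unfold olctD₁
  apply ContDiff.neg
  apply ContDiff.add
  · exact (hg.fderiv_right (by simp)).clm_apply contDiff_const
  · exact (contDiff_const.mul (Complex.ofRealCLM.contDiff.comp
      ((contDiff_const.mul contDiff_fst).add contDiff_const))).mul hg

lemma contDiff_olctD₂ (M : OLCTParams) (g : ℝ × ℝ → ℂ) (hg : ContDiff ℝ (⊤ : ℕ∞) g) :
    ContDiff ℝ (⊤ : ℕ∞) (olctD₂ M g) := by
  unfold olctD₂
  apply ContDiff.neg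
  apply ContDiff.add
  · exact (hg.fderiv_right (by simp)).clm_apply contDiff_const
  · exact (contDiff_const.mul (Complex.ofRealCLM.contDiff.comp
      ((contDiff_const.mul contDiff_snd).add contDiff_const))).mul hg

lemma contDiff_iterate_olctD₁ (M : OLCTParams) (g : ℝ × ℝ → ℂ) (hg : ContDiff ℝ (⊤ : ℕ∞) g) (k : ℕ) :
    ContDiff ℝ (⊤ : ℕ∞) ((olctD₁ M)^[k] g) := by
  induction k with
  | zero => simpa using hg
  | succ k ih => rw [Function.iterate_succ_apply']; exact contDiff_olctD₁ M _ ih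

lemma contDiff_iterate_olctD₂ (M : OLCTParams) (g : ℝ × ℝ → ℂ) (hg : ContDiff ℝ (⊤ : ℕ∞) g) (k : ℕ) :
    ContDiff ℝ (⊤ : ℕ∞) ((olctD₂ M)^[k] g) := by
  induction k with
  | zero => simpa using hg
  | succ k ih => rw [Function.iterate_succ_apply']; exact contDiff_olctD₂ M _ ih


/-- Differential property of the 2D OLCT. -/
theorem olct_derivative (M₁ M₂ : OLCTParams)
    (hM₁ : M₁.a * M₁.d - M₁.b * M₁.c = 1) (hM₂ : M₂.a * M₂.d - M₂.b * M₂.c = 1)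
    (hb₁ : M₁.b ≠ 0) (hb₂ : M₂.b ≠ 0)
    (f : ℝ × ℝ → ℂ) (hf : Integrable f) (hsmooth : ContDiff ℝ (⊤ : ℕ∞) f)
    (hint : ∀ m n : ℕ, Integrable ((olctD₁ M₁)^[m] ((olctD₂ M₂)^[n] f)))
    (m n : ℕ) (u : ℝ × ℝ) :
    olct M₁ M₂ ((olctD₁ M₁)^[m] ((olctD₂ M₂)^[n] f)) u =
      (-(Complex.I * (u.1 : ℂ)) / (M₁.b : ℂ)) ^ m *
        (-(Complex.I * (u.2 : ℂ)) / (M₂.b : ℂ)) ^ n * olct M₁ M₂ f u := by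
  have hint₂ : ∀ k : ℕ, Integrable ((olctD₂ M₂)^[k] f) := by
    intro k
    simpa using hint 0 k
  have key₂ : olct M₁ M₂ ((olctD₂ M₂)^[n] f) u =
      (-(Complex.I * (u.2 : ℂ)) / (M₂.b : ℂ)) ^ n * olct M₁ M₂ f u := by
    induction n with
    | zero => simp
    | succ k ih =>
        rw [Function.iterate_succ_apply',
          olct_step2 M₁ M₂ hb₁ hb₂ _ (hint₂ k) (contDiff_iterate_olctD₂ M₂ f hsmooth k)
            (by have := hint₂ (k + 1); rwa [Function.iterate_succ_apply'] at this) u, ih]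
        ring
  have key₁ : olct M₁ M₂ ((olctD₁ M₁)^[m] ((olctD₂ M₂)^[n] f)) u =
      (-(Complex.I * (u.1 : ℂ)) / (M₁.b : ℂ)) ^ m * olct M₁ M₂ ((olctD₂ M₂)^[n] f) u := by
    induction m with
    | zero => simp
    | succ k ih =>
        rw [Function.iterate_succ_apply',
          olct_step1 M₁ M₂ hb₁ hb₂ _ (hint k n)
            (contDiff_iterate_olctD₁ M₁ _ (contDiff_iterate_olctD₂ M₂ f hsmooth n) k)
            (by have := hint (k + 1) n; rwa [Function.iterate_succ_apply'] at this) u, ih]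
        ring
  rw [key₁, key₂]
  ring

end
end

section
/- Closed-form 2D OLCT of a Gaussian: for α₁, α₂ > 0 and f(t) = exp(−α₁ t₁² − α₂ t₂²), the 2D OLCT is O_{M₁M₂}[f](u) = exp( Σ_{r=1}^{2} (i/(2b_r)) (−2u_r(d_r τ_r − b_r η_r) + d_r u_r² + d_r τ_r²) ) · exp( Σ_{r=1}^{2} (−1/(2b_r)) (τ_r − u_r)² (2b_r α_r + i a_r)/(4 b_r² α_r² + a_r²) ) · (a₁ + 2iα₁b₁)^{−1/2} (a₂ + 2iα₂b₂)^{−1/2}, where the square roots are the principal branches. -/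
/-!
Kernel and Gaussian both factor over the two coordinates, so by Fubini the 2D transform is the
product of two 1D transforms. In one dimension, kernel times Gaussian is `exp (β t² + γ t + δ)`
with `Re β = -α < 0`, and the Gaussian integral `∫ exp (β t² + γ t + δ) = (π / -β) ^ (1/2) *
exp (δ - γ² / (4β))` yields the closed form. The kernel's normalisation `(2πib) ^ (-1/2)` and
`(π / -β) ^ (1/2)` combine into `(a + 2iαb) ^ (-1/2)` on the principal branch because `2πib` is
purely imaginary while `π / -β` lies in the open right half-plane, so no argument wraps around.
-/

open MeasureTheory Real

noncomputable section

open Complex in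
theorem Complex.mul_cpow_of_arg_add_mem_Ioc {x y : ℂ} (hx : x ≠ 0) (hy : y ≠ 0)
    (h : arg x + arg y ∈ Set.Ioc (-π) π) (s : ℂ) : (x * y) ^ s = x ^ s * y ^ s := by
  rw [cpow_def_of_ne_zero (mul_ne_zero hx hy), cpow_def_of_ne_zero hx, cpow_def_of_ne_zero hy,
    log_mul hx hy h, add_mul, exp_add]

open Complex in
theorem Complex.div_cpow_of_re_nonneg_of_re_pos {x y : ℂ} (hx : 0 ≤ x.re) (hy : 0 < y.re)
    (s : ℂ) : (x / y) ^ s = x ^ s / y ^ s := by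
  rcases eq_or_ne x 0 with rfl | hx₀
  · rcases eq_or_ne s 0 with rfl | hs <;> simp [*]
  have hy₀ : y ≠ 0 := by rintro rfl; simp at hy
  have hargx : |arg x| ≤ π / 2 := abs_arg_le_pi_div_two_iff.mpr hx
  have hargy : |arg y| < π / 2 := abs_arg_lt_pi_div_two_iff.mpr (Or.inl hy)
  have hy_ne_pi : arg y ≠ π := by intro h; rw [h, abs_of_pos pi_pos] at hargy; linarith [pi_pos]
  rw [div_eq_mul_inv, mul_cpow_of_arg_add_mem_Ioc hx₀ (inv_ne_zero hy₀), inv_cpow y s hy_ne_pi,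
    div_eq_mul_inv]
  rw [arg_inv, if_neg hy_ne_pi]
  constructor <;> linarith [abs_le.mp hargx, abs_lt.mp hargy]

def olct1 (M : OLCTParams) (g : ℝ → ℂ) (u : ℝ) : ℂ :=
  ∫ t : ℝ, olctKernel M u t * g t

theorem olct_prod_mul (M₁ M₂ : OLCTParams) (g₁ g₂ : ℝ → ℂ) (u : ℝ × ℝ) :
    olct M₁ M₂ (fun t => g₁ t.1 * g₂ t.2) u = olct1 M₁ g₁ u.1 * olct1 M₂ g₂ u.2 := by
  rw [olct, olct1, olct1, Measure.volume_eq_prod, ← integral_prod_mul]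
  congr 1 with t
  ring

-- The coefficient of `t ^ 2` in the exponent of `olctKernel M u t * exp (-α * t ^ 2)`.
def olctGaussCoeff (M : OLCTParams) (α : ℝ) : ℂ := Complex.I * ((M.a / (2 * M.b) : ℝ) : ℂ) - α

section Gaussian

variable (M : OLCTParams) {α : ℝ}

theorem olctKernel_mul_gaussian (u t : ℝ) :
    olctKernel M u t * Complex.exp (-α * t ^ 2) =
      (((2 * π : ℝ) : ℂ) * Complex.I * M.b) ^ (-(1 / 2 : ℂ)) *
        Complex.exp (olctGaussCoeff M α * t ^ 2 + Complex.I * (M.τ - u) / M.b * t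
          + Complex.I / ((2 * M.b : ℝ) : ℂ) *
            ((-2 * u * (M.d * M.τ - M.b * M.η) + M.d * u ^ 2 + M.d * M.τ ^ 2 : ℝ) : ℂ)) := by
  rw [olctKernel, olctGaussCoeff, mul_assoc, ← Complex.exp_add]
  congr 2
  push_cast
  ring

theorem re_olctGaussCoeff : (olctGaussCoeff M α).re = -α := by
  simp only [olctGaussCoeff, Complex.sub_re, Complex.mul_re, Complex.I_re, Complex.I_im,
    Complex.ofReal_re, Complex.ofReal_im]
  ring

theorem olctGaussCoeff_ne_zero (hα : 0 < α) : olctGaussCoeff M α ≠ 0 := by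
  intro h
  have := re_olctGaussCoeff M (α := α)
  rw [h, Complex.zero_re] at this
  linarith

theorem olctGaussCoeff_eq_div (hb : M.b ≠ 0) :
    olctGaussCoeff M α = (Complex.I * M.a - 2 * M.b * α) / (2 * M.b) := by
  have hb' : (M.b : ℂ) ≠ 0 := by exact_mod_cast hb
  rw [olctGaussCoeff]
  push_cast
  field_simp

theorem sq_div_four_mul_olctGaussCoeff (hb : M.b ≠ 0) (hα : 0 < α) (u : ℝ) :
    (Complex.I * (M.τ - u) / M.b) ^ 2 / (4 * olctGaussCoeff M α) =
      -((((-1) / (2 * M.b) * (M.τ - u) ^ 2 : ℝ) : ℂ) *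
        (((2 * M.b * α : ℝ) : ℂ) + Complex.I * M.a) /
          ((4 * M.b ^ 2 * α ^ 2 + M.a ^ 2 : ℝ) : ℂ)) := by
  have hD : ((4 * M.b ^ 2 * α ^ 2 + M.a ^ 2 : ℝ) : ℂ) ≠ 0 := by
    exact_mod_cast (by positivity : 4 * M.b ^ 2 * α ^ 2 + M.a ^ 2 ≠ 0)
  have hb' : (M.b : ℂ) ≠ 0 := by exact_mod_cast hb
  have hfactor : ((4 * M.b ^ 2 * α ^ 2 + M.a ^ 2 : ℝ) : ℂ) =
      -(2 * M.b * olctGaussCoeff M α) * (((2 * M.b * α : ℝ) : ℂ) + Complex.I * M.a) := by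
    rw [olctGaussCoeff_eq_div M hb]
    push_cast
    field_simp
    linear_combination (M.a : ℂ) ^ 2 * Complex.I_sq
  have hc : ((2 * M.b * α : ℝ) : ℂ) + Complex.I * M.a ≠ 0 := by
    rintro hc
    rw [hc, mul_zero] at hfactor
    exact hD hfactor
  have hβ₀ := olctGaussCoeff_ne_zero M hα
  rw [hfactor, mul_div_mul_right _ _ hc]
  push_cast
  field_simp
  linear_combination 4 * (M.τ - u : ℂ) ^ 2 * Complex.I_sq

theorem cpow_neg_half_mul_cpow_half_olctGaussCoeff (hb : M.b ≠ 0) (hα : 0 < α) :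
    (((2 * π : ℝ) : ℂ) * Complex.I * M.b) ^ (-(1 / 2 : ℂ)) *
        (π / -olctGaussCoeff M α) ^ (1 / 2 : ℂ) =
      ((M.a : ℂ) + 2 * Complex.I * α * M.b) ^ (-(1 / 2 : ℂ)) := by
  have hβ₀ := olctGaussCoeff_ne_zero M hα
  have hQ_re : 0 < (π / -olctGaussCoeff M α : ℂ).re := by
    rw [div_eq_mul_inv, Complex.re_ofReal_mul, Complex.inv_re, Complex.neg_re, re_olctGaussCoeff,
      neg_neg]
    have := Complex.normSq_pos.mpr (neg_ne_zero.mpr hβ₀)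
    positivity
  have hP_re : 0 ≤ (((2 * π : ℝ) : ℂ) * Complex.I * M.b).re := by simp
  have hPQ : ((2 * π : ℝ) : ℂ) * Complex.I * M.b / (π / -olctGaussCoeff M α) =
      (M.a : ℂ) + 2 * Complex.I * α * M.b := by
    have hb' : (M.b : ℂ) ≠ 0 := by exact_mod_cast hb
    rw [olctGaussCoeff_eq_div M hb] at hβ₀ ⊢
    push_cast
    field_simp
    linear_combination -(M.a : ℂ) * Complex.I_sq
  rw [← hPQ, Complex.div_cpow_of_re_nonneg_of_re_pos hP_re hQ_re,
    Complex.cpow_neg (π / -olctGaussCoeff M α), div_inv_eq_mul]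

theorem olct1_gaussian (hb : M.b ≠ 0) (hα : 0 < α) (u : ℝ) :
    olct1 M (fun t => Complex.exp (-α * t ^ 2)) u =
      Complex.exp (Complex.I / ((2 * M.b : ℝ) : ℂ) *
          ((-2 * u * (M.d * M.τ - M.b * M.η) + M.d * u ^ 2 + M.d * M.τ ^ 2 : ℝ) : ℂ)) *
        Complex.exp ((((-1) / (2 * M.b) * (M.τ - u) ^ 2 : ℝ) : ℂ) *
            (((2 * M.b * α : ℝ) : ℂ) + Complex.I * M.a) /
              ((4 * M.b ^ 2 * α ^ 2 + M.a ^ 2 : ℝ) : ℂ)) *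
        ((M.a : ℂ) + 2 * Complex.I * α * M.b) ^ (-(1 / 2 : ℂ)) := by
  have hβ : (olctGaussCoeff M α).re < 0 := by rw [re_olctGaussCoeff]; linarith
  rw [olct1, funext (olctKernel_mul_gaussian M u), integral_const_mul, integral_cexp_quadratic hβ,
    sq_div_four_mul_olctGaussCoeff M hb hα, sub_neg_eq_add, Complex.exp_add,
    ← cpow_neg_half_mul_cpow_half_olctGaussCoeff M hb hα]
  ring

end Gaussian

theorem olct_gaussian_general (M₁ M₂ : OLCTParams)
    (hb₁ : M₁.b ≠ 0) (hb₂ : M₂.b ≠ 0)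
    (α₁ α₂ : ℝ) (hα₁ : 0 < α₁) (hα₂ : 0 < α₂) (u : ℝ × ℝ) :
    olct M₁ M₂ (fun t => Complex.exp (-((α₁ * t.1 ^ 2 + α₂ * t.2 ^ 2 : ℝ) : ℂ))) u =
      Complex.exp
          ((Complex.I / ((2 * M₁.b : ℝ) : ℂ)) *
              ((-2 * u.1 * (M₁.d * M₁.τ - M₁.b * M₁.η) + M₁.d * u.1 ^ 2 + M₁.d * M₁.τ ^ 2 : ℝ) : ℂ)
            + (Complex.I / ((2 * M₂.b : ℝ) : ℂ)) *
              ((-2 * u.2 * (M₂.d * M₂.τ - M₂.b * M₂.η) + M₂.d * u.2 ^ 2 + M₂.d * M₂.τ ^ 2 : ℝ) : ℂ)) *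
        Complex.exp
          ((((-1) / (2 * M₁.b) * (M₁.τ - u.1) ^ 2 : ℝ) : ℂ) *
              (((2 * M₁.b * α₁ : ℝ) : ℂ) + Complex.I * (M₁.a : ℂ)) /
              (((4 * M₁.b ^ 2 * α₁ ^ 2 + M₁.a ^ 2 : ℝ) : ℂ))
            + (((-1) / (2 * M₂.b) * (M₂.τ - u.2) ^ 2 : ℝ) : ℂ) *
              (((2 * M₂.b * α₂ : ℝ) : ℂ) + Complex.I * (M₂.a : ℂ)) /
              (((4 * M₂.b ^ 2 * α₂ ^ 2 + M₂.a ^ 2 : ℝ) : ℂ))) *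
        ((M₁.a : ℂ) + 2 * Complex.I * (α₁ : ℂ) * (M₁.b : ℂ)) ^ (-(1 / 2 : ℂ)) *
        ((M₂.a : ℂ) + 2 * Complex.I * (α₂ : ℂ) * (M₂.b : ℂ)) ^ (-(1 / 2 : ℂ)) := by
  have hseparable : (fun t : ℝ × ℝ => Complex.exp (-((α₁ * t.1 ^ 2 + α₂ * t.2 ^ 2 : ℝ) : ℂ))) =
      fun t => Complex.exp (-α₁ * t.1 ^ 2) * Complex.exp (-α₂ * t.2 ^ 2) := by
    funext t
    rw [← Complex.exp_add]
    push_cast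
    ring_nf
  rw [hseparable, olct_prod_mul M₁ M₂ (fun x => Complex.exp (-α₁ * x ^ 2))
    (fun x => Complex.exp (-α₂ * x ^ 2)), olct1_gaussian M₁ hb₁ hα₁, olct1_gaussian M₂ hb₂ hα₂,
    Complex.exp_add, Complex.exp_add]
  ring

/-- Closed-form 2D OLCT of the Gaussian f(t) = exp(−α₁t₁² − α₂t₂²). -/
theorem olct_gaussian (M₁ M₂ : OLCTParams)
    (hM₁ : M₁.a * M₁.d - M₁.b * M₁.c = 1) (hM₂ : M₂.a * M₂.d - M₂.b * M₂.c = 1)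
    (hb₁ : M₁.b ≠ 0) (hb₂ : M₂.b ≠ 0)
    (α₁ α₂ : ℝ) (hα₁ : 0 < α₁) (hα₂ : 0 < α₂) (u : ℝ × ℝ) :
    olct M₁ M₂ (fun t => Complex.exp (-((α₁ * t.1 ^ 2 + α₂ * t.2 ^ 2 : ℝ) : ℂ))) u =
      Complex.exp
          ((Complex.I / ((2 * M₁.b : ℝ) : ℂ)) *
              ((-2 * u.1 * (M₁.d * M₁.τ - M₁.b * M₁.η) + M₁.d * u.1 ^ 2 + M₁.d * M₁.τ ^ 2 : ℝ) : ℂ)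
            + (Complex.I / ((2 * M₂.b : ℝ) : ℂ)) *
              ((-2 * u.2 * (M₂.d * M₂.τ - M₂.b * M₂.η) + M₂.d * u.2 ^ 2 + M₂.d * M₂.τ ^ 2 : ℝ) : ℂ)) *
        Complex.exp
          ((((-1) / (2 * M₁.b) * (M₁.τ - u.1) ^ 2 : ℝ) : ℂ) *
              (((2 * M₁.b * α₁ : ℝ) : ℂ) + Complex.I * (M₁.a : ℂ)) /
              (((4 * M₁.b ^ 2 * α₁ ^ 2 + M₁.a ^ 2 : ℝ) : ℂ))
            + (((-1) / (2 * M₂.b) * (M₂.τ - u.2) ^ 2 : ℝ) : ℂ) *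
              (((2 * M₂.b * α₂ : ℝ) : ℂ) + Complex.I * (M₂.a : ℂ)) /
              (((4 * M₂.b ^ 2 * α₂ ^ 2 + M₂.a ^ 2 : ℝ) : ℂ))) *
        ((M₁.a : ℂ) + 2 * Complex.I * (α₁ : ℂ) * (M₁.b : ℂ)) ^ (-(1 / 2 : ℂ)) *
        ((M₂.a : ℂ) + 2 * Complex.I * (α₂ : ℂ) * (M₂.b : ℂ)) ^ (-(1 / 2 : ℂ)) :=
  olct_gaussian_general M₁ M₂ hb₁ hb₂ α₁ α₂ hα₁ hα₂ u
end
end
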